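/- arXiv:2509.06559 — 5 statements merged into one kernel-verified Lean document; each statement's English description precedes it below -/
import Mathlib

section
/- Let G be a finite set and let w, v : G → ℝ be probability distributions with w nonnegative and v strictly positive. If w is strictly positive, the supremum sup_x (∑_g w(g)x(g) − (1/2)log ∑_g ν(g)e^{2x(g)}) is attained exactly at the vectors x(g) = (1/2)log(w(g)/ν(g)) + C for constants C ∈ ℝ. -/
open Real Finset

theorem stmt3 (G : Type*) [Fintype G] [Nonempty G] (w ν : G → ℝ)
    (hw : ∀ g, 0 < w g) (hw1 : ∑ g, w g = 1)
    (hν : ∀ g, 0 < ν g) (hν1 : ∑ g, ν g = 1) (x : G → ℝ) :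
    (∀ y : G → ℝ,
        (∑ g, w g * y g - (1 / 2) * Real.log (∑ g, ν g * Real.exp (2 * y g)))
          ≤ (∑ g, w g * x g - (1 / 2) * Real.log (∑ g, ν g * Real.exp (2 * x g))))
      ↔ ∃ C : ℝ, ∀ g, x g = (1 / 2) * Real.log (w g / ν g) + C := by
  classical
  set L : ℝ := ∑ g, w g * Real.log (w g / ν g) with hL
  set a : (G → ℝ) → G → ℝ := fun y g => 2 * y g - Real.log (w g / ν g) with ha
  have hdiv : ∀ g : G, 0 < w g / ν g := fun g => div_pos (hw g) (hν g)
  have hrw : ∀ y : G → ℝ, ∑ g, ν g * Real.exp (2 * y g) = ∑ g, w g * Real.exp (a y g) := by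
    intro y
    refine Finset.sum_congr rfl fun g _ => ?_
    have h1 : Real.exp (a y g) = Real.exp (2 * y g) / (w g / ν g) := by
      rw [ha, Real.exp_sub, Real.exp_log (hdiv g)]
    rw [h1]
    field_simp [(hw g).ne', (hν g).ne']
  have hwa : ∀ y : G → ℝ, ∑ g, w g * a y g = 2 * (∑ g, w g * y g) - L := by
    intro y
    have h1 : ∀ g : G, w g * a y g = 2 * (w g * y g) - w g * Real.log (w g / ν g) := by
      intro g; rw [ha]; ring
    rw [Finset.sum_congr rfl fun g _ => h1 g, Finset.sum_sub_distrib, ← Finset.mul_sum, hL]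
  have hjensen : ∀ y : G → ℝ,
      Real.exp (∑ g, w g * a y g) ≤ ∑ g, w g * Real.exp (a y g) := by
    intro y
    have := strictConvexOn_exp.convexOn.map_sum_le (t := Finset.univ) (w := w) (p := a y)
      (fun i _ => (hw i).le) hw1 (fun i _ => Set.mem_univ _)
    simpa [smul_eq_mul] using this
  have hSpos : ∀ y : G → ℝ, 0 < ∑ g, ν g * Real.exp (2 * y g) := by
    intro y
    exact Finset.sum_pos (fun g _ => mul_pos (hν g) (Real.exp_pos _)) Finset.univ_nonempty
  have hbound : ∀ y : G → ℝ,
      ∑ g, w g * y g - (1 / 2) * Real.log (∑ g, ν g * Real.exp (2 * y g)) ≤ L / 2 := by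
    intro y
    have h1 : ∑ g, w g * a y g ≤ Real.log (∑ g, ν g * Real.exp (2 * y g)) := by
      rw [hrw y]
      calc ∑ g, w g * a y g = Real.log (Real.exp (∑ g, w g * a y g)) := (Real.log_exp _).symm
        _ ≤ Real.log (∑ g, w g * Real.exp (a y g)) :=
            Real.log_le_log (Real.exp_pos _) (hjensen y)
    rw [hwa y] at h1
    linarith
  have hhalf : ∑ g, w g * ((1 / 2) * Real.log (w g / ν g)) = L / 2 := by
    rw [hL, Finset.sum_div]
    exact Finset.sum_congr rfl fun g _ => by ring
  have hval : ∑ g, w g * ((1 / 2) * Real.log (w g / ν g)) -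
      (1 / 2) * Real.log (∑ g, ν g * Real.exp (2 * ((1 / 2) * Real.log (w g / ν g)))) = L / 2 := by
    have h1 : ∑ g, ν g * Real.exp (2 * ((1 / 2) * Real.log (w g / ν g))) = 1 := by
      calc ∑ g, ν g * Real.exp (2 * ((1 / 2) * Real.log (w g / ν g)))
          = ∑ g, w g := by
            refine Finset.sum_congr rfl fun g _ => ?_
            have h : (2 : ℝ) * ((1 / 2) * Real.log (w g / ν g)) = Real.log (w g / ν g) := by ring
            rw [h, Real.exp_log (hdiv g), mul_div_cancel₀ _ (hν g).ne']
        _ = 1 := hw1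
    rw [h1, Real.log_one, mul_zero, sub_zero, hhalf]
  constructor
  · intro hmax
    have hxe : ∑ g, w g * x g - (1 / 2) * Real.log (∑ g, ν g * Real.exp (2 * x g)) = L / 2 := by
      have h1 := hmax (fun g => (1 / 2) * Real.log (w g / ν g))
      rw [hval] at h1
      exact le_antisymm (hbound x) h1
    have hlog : Real.log (∑ g, ν g * Real.exp (2 * x g)) = ∑ g, w g * a x g := by
      rw [hwa x]; linarith
    have heq : ∑ g, w g * Real.exp (a x g) ≤ Real.exp (∑ g, w g * a x g) := by
      rw [← hlog, Real.exp_log (hSpos x), hrw x]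
    have hconst := strictConvexOn_exp.eq_of_le_map_sum (t := Finset.univ) (w := w) (p := a x)
      (fun i _ => hw i) hw1 (fun i _ => Set.mem_univ _) (by simpa [smul_eq_mul] using heq)
    obtain ⟨g₀⟩ := ‹Nonempty G›
    refine ⟨x g₀ - (1 / 2) * Real.log (w g₀ / ν g₀), fun g => ?_⟩
    have := hconst (Finset.mem_univ g) (Finset.mem_univ g₀)
    simp only [ha] at this
    linarith
  · rintro ⟨C, hC⟩ y
    have h1 : ∑ g, ν g * Real.exp (2 * x g) = Real.exp (2 * C) := by
      calc ∑ g, ν g * Real.exp (2 * x g)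
          = ∑ g, w g * Real.exp (2 * C) := by
            refine Finset.sum_congr rfl fun g _ => ?_
            rw [hC g]
            have h : (2 : ℝ) * ((1 / 2) * Real.log (w g / ν g) + C)
                = Real.log (w g / ν g) + 2 * C := by ring
            rw [h, Real.exp_add, Real.exp_log (hdiv g), ← mul_assoc,
              mul_div_cancel₀ _ (hν g).ne']
        _ = Real.exp (2 * C) := by rw [← Finset.sum_mul, hw1, one_mul]
    have h2 : ∑ g, w g * x g = L / 2 + C := by
      calc ∑ g, w g * x g = ∑ g, w g * ((1 / 2) * Real.log (w g / ν g) + C) :=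
            Finset.sum_congr rfl fun g _ => by rw [hC g]
        _ = L / 2 + C := by
            simp only [mul_add, Finset.sum_add_distrib, ← Finset.sum_mul, hw1, one_mul, hhalf]
    have h3 : ∑ g, w g * x g - (1 / 2) * Real.log (∑ g, ν g * Real.exp (2 * x g)) = L / 2 := by
      rw [h1, h2, Real.log_exp]; ring
    rw [h3]
    exact hbound y
end

section
/- Let V, V₁, V₂, … and W, W₁, W₂, … be bounded measurable functions [0,1]² → ℝ with ‖Vₙ‖_∞ ≤ C for all n. If Vₙ → V and Wₙ → W in the cut norm, then Vₙ∘Wₙ → V∘W in the L¹ norm, where (V∘W)(x,y) = ∫₀¹ V(x,t)W(t,y)dt. -/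
open MeasureTheory Filter

/-- The cut norm of a kernel on `[0,1]²`. -/
noncomputable def cutNorm (W : ℝ → ℝ → ℝ) : ℝ :=
  sSup {r : ℝ | ∃ S T : Set ℝ, S ⊆ Set.Icc 0 1 ∧ T ⊆ Set.Icc 0 1 ∧
    MeasurableSet S ∧ MeasurableSet T ∧
    r = |∫ x in S, ∫ y in T, W x y|}

/-- The operator product `(V ∘ W)(x,y) = ∫₀¹ V(x,t) W(t,y) dt`. -/
noncomputable def opProd (V W : ℝ → ℝ → ℝ) (x y : ℝ) : ℝ :=
  ∫ t in Set.Icc (0 : ℝ) 1, V x t * W t y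

/-!
Write `Vₙ ∘ Wₙ - V ∘ W = Vₙ ∘ (Wₙ - W) + (Vₙ - V) ∘ W`. The key estimate is that for a kernel `U`
and a function `|g| ≤ b`, `∫ₓ |∫ₜ U(x,t) g(t) dt| dx ≤ 4 b ‖U‖_□`: splitting `x` by the sign of the
inner integral reduces it to bounding `∫_S ∫ₜ U(x,t) g(t)`, and after Fubini, splitting `t` by the
sign of `∫_S U(x,t) dx` leaves integrals of `U` over rectangles. Applied to the two terms (the first
after transposing) it bounds the `L¹` distance by `4 C ‖Wₙ - W‖_□ + 4 ‖W‖_∞ ‖Vₙ - V‖_□`.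
-/

open Function Set

theorem abs_mul_le_of_abs_le {x y a b : ℝ} (hx : |x| ≤ a) (hy : |y| ≤ b) : |x * y| ≤ a * b :=
  abs_mul x y ▸ mul_le_mul hx hy (abs_nonneg y) ((abs_nonneg x).trans hx)

theorem exists_abs_sub_le {α β : Type*} {U U' : α → β → ℝ} (hU : ∃ D, ∀ x y, |U x y| ≤ D)
    (hU' : ∃ D, ∀ x y, |U' x y| ≤ D) : ∃ D, ∀ x y, |U x y - U' x y| ≤ D :=
  let ⟨D, hD⟩ := hU
  let ⟨D', hD'⟩ := hU'
  ⟨D + D', fun x y => (abs_sub _ _).trans (add_le_add (hD x y) (hD' x y))⟩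

section MeasureSpace

variable {α : Type*} [MeasurableSpace α] {μ : Measure α}

/-- `opProd V W = kernelProd (volume.restrict (Icc 0 1)) V W` by definition. -/
noncomputable def kernelProd (μ : Measure α) (A B : α → α → ℝ) (x y : α) : ℝ :=
  ∫ t, A x t * B t y ∂μ

def IsCutNormBound (μ : Measure α) (U : α → α → ℝ) (K : ℝ) : Prop :=
  ∀ S T, MeasurableSet S → MeasurableSet T → |∫ x in S, ∫ y in T, U x y ∂μ ∂μ| ≤ K

theorem integral_abs_le_two_mul_of_forall_abs_setIntegral_le {f : α → ℝ} (hf : Measurable f)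
    (hfi : Integrable f μ) {K : ℝ} (hK : ∀ S, MeasurableSet S → |∫ x in S, f x ∂μ| ≤ K) :
    ∫ x, |f x| ∂μ ≤ 2 * K := by
  set S := {x | 0 ≤ f x}
  have hS : MeasurableSet S := hf measurableSet_Ici
  have hpos : ∫ x in S, |f x| ∂μ = ∫ x in S, f x ∂μ :=
    setIntegral_congr_fun hS fun x hx => abs_of_nonneg hx
  have hneg : ∫ x in Sᶜ, |f x| ∂μ = -∫ x in Sᶜ, f x ∂μ := by
    rw [← integral_neg]
    exact setIntegral_congr_fun hS.compl fun x hx => abs_of_neg (not_le.mp hx)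
  rw [← integral_add_compl hS hfi.abs, hpos, hneg]
  linarith [le_abs_self (∫ x in S, f x ∂μ), neg_le_abs (∫ x in Sᶜ, f x ∂μ), hK S hS,
    hK Sᶜ hS.compl]

theorem integral_integral_abs_add_le [SFinite μ] {F G : α → α → ℝ}
    (hF : Integrable (uncurry F) (μ.prod μ)) (hG : Integrable (uncurry G) (μ.prod μ)) :
    ∫ x, ∫ y, |F x y + G x y| ∂μ ∂μ ≤
      ∫ x, ∫ y, |F x y| ∂μ ∂μ + ∫ x, ∫ y, |G x y| ∂μ ∂μ := by
  rw [integral_integral (f := fun x y => |F x y + G x y|) (hF.add hG).abs,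
    integral_integral (f := fun x y => |F x y|) hF.abs,
    integral_integral (f := fun x y => |G x y|) hG.abs]
  exact (integral_mono (hF.add hG).abs (hF.abs.add hG.abs) fun p => abs_add_le _ _).trans_eq
    (integral_add hF.abs hG.abs)

theorem integrable_of_abs_le [IsFiniteMeasure μ] {f : α → ℝ} (hf : Measurable f) {D : ℝ}
    (hfD : ∀ x, |f x| ≤ D) : Integrable f μ :=
  .of_bound hf.aestronglyMeasurable D (ae_of_all _ hfD)

theorem IsCutNormBound.transpose [IsFiniteMeasure μ] {U : α → α → ℝ}
    (hU : Measurable (uncurry U)) (hUbd : ∃ D, ∀ x y, |U x y| ≤ D) {K : ℝ}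
    (hK : IsCutNormBound μ U K) :
    IsCutNormBound μ (fun x y => U y x) K := by
  obtain ⟨D, hD⟩ := hUbd
  intro S T hS hT
  show |∫ x in S, ∫ y in T, U y x ∂μ ∂μ| ≤ K
  rw [integral_integral_swap (f := fun x y => U y x)
    (integrable_of_abs_le (hU.comp measurable_swap) fun p => hD p.2 p.1)]
  exact hK T S hT hS

variable [IsProbabilityMeasure μ]

theorem abs_setIntegral_le_of_abs_le {f : α → ℝ} {D : ℝ} (hfD : ∀ x, |f x| ≤ D) (S : Set α) :
    |∫ x in S, f x ∂μ| ≤ D := by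
  have : Nonempty α := nonempty_of_isProbabilityMeasure μ
  have hD : 0 ≤ D := (abs_nonneg _).trans (hfD (Classical.arbitrary α))
  calc |∫ x in S, f x ∂μ| ≤ D * μ.real S :=
        norm_setIntegral_le_of_norm_le_const (f := f) (measure_lt_top μ S) fun x _ => hfD x
    _ ≤ D := mul_le_of_le_one_right hD measureReal_le_one

theorem abs_integral_le_of_abs_le {f : α → ℝ} {D : ℝ} (hfD : ∀ x, |f x| ≤ D) :
    |∫ x, f x ∂μ| ≤ D := by
  simpa using abs_setIntegral_le_of_abs_le (μ := μ) hfD univ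

theorem integral_le_of_nonneg_of_le {f : α → ℝ} {c : ℝ} (hf₀ : ∀ x, 0 ≤ f x)
    (hfc : ∀ x, f x ≤ c) : ∫ x, f x ∂μ ≤ c :=
  (le_abs_self _).trans <|
    abs_integral_le_of_abs_le fun x => (abs_of_nonneg (hf₀ x)).trans_le (hfc x)

theorem integral_abs_integral_mul_le {U : α → α → ℝ} (hU : Measurable (uncurry U))
    (hUbd : ∃ D, ∀ x t, |U x t| ≤ D) {K : ℝ} (hK : IsCutNormBound μ U K) {g : α → ℝ}
    (hg : Measurable g) {b : ℝ} (hgb : ∀ t, |g t| ≤ b) :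
    ∫ x, |∫ t, U x t * g t ∂μ| ∂μ ≤ 4 * b * K := by
  have : Nonempty α := nonempty_of_isProbabilityMeasure μ
  have hb : 0 ≤ b := (abs_nonneg _).trans (hgb (Classical.arbitrary α))
  obtain ⟨D, hD⟩ := hUbd
  have hUg : Measurable (uncurry fun x t => U x t * g t) := hU.mul (hg.comp measurable_snd)
  have hUgD : ∀ x t, |U x t * g t| ≤ D * b := fun x t => abs_mul_le_of_abs_le (hD x t) (hgb t)
  have hf : Measurable fun x => ∫ t, U x t * g t ∂μ :=
    hUg.stronglyMeasurable.integral_prod_right.measurable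
  suffices hS : ∀ S, MeasurableSet S → |∫ x in S, ∫ t, U x t * g t ∂μ ∂μ| ≤ b * (2 * K) by
    have := integral_abs_le_two_mul_of_forall_abs_setIntegral_le hf
      (integrable_of_abs_le hf fun x => abs_integral_le_of_abs_le (hUgD x)) hS
    linarith
  intro S hS
  set h : α → ℝ := fun t => ∫ x in S, U x t ∂μ
  have hh : Measurable h := hU.stronglyMeasurable.integral_prod_left.measurable
  have hhi : Integrable h μ :=
    integrable_of_abs_le hh fun t => abs_setIntegral_le_of_abs_le (fun x => hD x t) S
  have hhK : ∀ T, MeasurableSet T → |∫ t in T, h t ∂μ| ≤ K := fun T hT => by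
    rw [integral_integral_swap (f := fun t x => U x t)
      (integrable_of_abs_le (hU.comp measurable_swap) fun p => hD p.2 p.1)]
    exact hK S T hS hT
  have hswap : ∫ x in S, ∫ t, U x t * g t ∂μ ∂μ = ∫ t, h t * g t ∂μ := by
    rw [integral_integral_swap (integrable_of_abs_le hUg fun p => hUgD p.1 p.2)]
    simp only [h, integral_mul_const]
  calc |∫ x in S, ∫ t, U x t * g t ∂μ ∂μ| ≤ ∫ t, b * |h t| ∂μ := by
        rw [hswap]
        refine norm_integral_le_of_norm_le (f := fun t => h t * g t) (hhi.abs.const_mul b)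
          (ae_of_all _ fun t => ?_)
        rw [Real.norm_eq_abs, abs_mul, mul_comm]
        exact mul_le_mul_of_nonneg_right (hgb t) (abs_nonneg _)
    _ = b * ∫ t, |h t| ∂μ := integral_const_mul b _
    _ ≤ b * (2 * K) := mul_le_mul_of_nonneg_left
        (integral_abs_le_two_mul_of_forall_abs_setIntegral_le hh hhi hhK) hb

section KernelProd

variable {A A' B B' : α → α → ℝ}

theorem measurable_kernelProd (hA : Measurable (uncurry A)) (hB : Measurable (uncurry B)) :
    Measurable (uncurry (kernelProd μ A B)) := by
  have hAB : Measurable (uncurry fun (p : α × α) t => A p.1 t * B t p.2) :=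
    (hA.comp (measurable_fst.fst.prodMk measurable_snd)).mul
      (hB.comp (measurable_snd.prodMk measurable_fst.snd))
  exact hAB.stronglyMeasurable.integral_prod_right.measurable

theorem abs_kernelProd_le {a b : ℝ} (hAa : ∀ x y, |A x y| ≤ a) (hBb : ∀ x y, |B x y| ≤ b)
    (x y : α) : |kernelProd μ A B x y| ≤ a * b :=
  abs_integral_le_of_abs_le fun t => abs_mul_le_of_abs_le (hAa x t) (hBb t y)

theorem integrable_kernelProd (hA : Measurable (uncurry A)) (hAbd : ∃ a, ∀ x y, |A x y| ≤ a)
    (hB : Measurable (uncurry B)) (hBbd : ∃ b, ∀ x y, |B x y| ≤ b) :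
    Integrable (uncurry (kernelProd μ A B)) (μ.prod μ) := by
  obtain ⟨a, hAa⟩ := hAbd
  obtain ⟨b, hBb⟩ := hBbd
  exact integrable_of_abs_le (measurable_kernelProd hA hB) fun p =>
    abs_kernelProd_le hAa hBb p.1 p.2

theorem kernelProd_sub_kernelProd (hA : Measurable (uncurry A))
    (hAbd : ∃ a, ∀ x y, |A x y| ≤ a)
    (hA' : Measurable (uncurry A')) (hA'bd : ∃ a, ∀ x y, |A' x y| ≤ a)
    (hB : Measurable (uncurry B)) (hBbd : ∃ b, ∀ x y, |B x y| ≤ b)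
    (hB' : Measurable (uncurry B')) (hB'bd : ∃ b, ∀ x y, |B' x y| ≤ b) (x y : α) :
    kernelProd μ A B x y - kernelProd μ A' B' x y =
      kernelProd μ A (fun x y => B x y - B' x y) x y +
        kernelProd μ (fun x y => A x y - A' x y) B' x y := by
  have hint : ∀ {F G : α → α → ℝ}, Measurable (uncurry F) → (∃ a, ∀ x y, |F x y| ≤ a) →
      Measurable (uncurry G) → (∃ b, ∀ x y, |G x y| ≤ b) →
        Integrable (fun t => F x t * G t y) μ :=
    fun hF ⟨_, hFa⟩ hG ⟨_, hGb⟩ => integrable_of_abs_le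
      (hF.of_uncurry_left.mul hG.of_uncurry_right) fun t => abs_mul_le_of_abs_le (hFa x t) (hGb t y)
  simp only [kernelProd, mul_sub, sub_mul]
  rw [integral_sub (hint hA hAbd hB hBbd) (hint hA hAbd hB' hB'bd),
    integral_sub (hint hA hAbd hB' hB'bd) (hint hA' hA'bd hB' hB'bd)]
  ring

theorem integral_integral_abs_kernelProd_le_of_left (hA : Measurable (uncurry A))
    (hAbd : ∃ a, ∀ x y, |A x y| ≤ a) {K : ℝ} (hK : IsCutNormBound μ A K)
    (hB : Measurable (uncurry B)) {b : ℝ} (hBb : ∀ x y, |B x y| ≤ b) :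
    ∫ x, ∫ y, |kernelProd μ A B x y| ∂μ ∂μ ≤ 4 * b * K := by
  rw [integral_integral_swap (f := fun x y => |kernelProd μ A B x y|)
    (integrable_kernelProd hA hAbd hB ⟨b, hBb⟩).abs]
  exact integral_le_of_nonneg_of_le (fun y => integral_nonneg fun x => abs_nonneg _) fun y =>
    integral_abs_integral_mul_le hA hAbd hK hB.of_uncurry_right fun t => hBb t y

theorem integral_integral_abs_kernelProd_le_of_right (hA : Measurable (uncurry A)) {a : ℝ}
    (hAa : ∀ x y, |A x y| ≤ a) (hB : Measurable (uncurry B)) (hBbd : ∃ b, ∀ x y, |B x y| ≤ b)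
    {K : ℝ} (hK : IsCutNormBound μ B K) :
    ∫ x, ∫ y, |kernelProd μ A B x y| ∂μ ∂μ ≤ 4 * a * K := by
  refine integral_le_of_nonneg_of_le (fun x => integral_nonneg fun y => abs_nonneg _) fun x => ?_
  simpa only [kernelProd, mul_comm (A x _)] using
    integral_abs_integral_mul_le (U := fun y t => B t y) (hB.comp measurable_swap)
      (hBbd.imp fun b hb x y => hb y x) (hK.transpose hB hBbd) hA.of_uncurry_left (hAa x)

theorem integral_integral_abs_kernelProd_sub_le (hA : Measurable (uncurry A)) {a : ℝ}
    (hAa : ∀ x y, |A x y| ≤ a) (hA' : Measurable (uncurry A'))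
    (hA'bd : ∃ a, ∀ x y, |A' x y| ≤ a) (hB : Measurable (uncurry B))
    (hBbd : ∃ b, ∀ x y, |B x y| ≤ b) (hB' : Measurable (uncurry B')) {b : ℝ}
    (hB'b : ∀ x y, |B' x y| ≤ b) {KA KB : ℝ}
    (hKA : IsCutNormBound μ (fun x y => A x y - A' x y) KA)
    (hKB : IsCutNormBound μ (fun x y => B x y - B' x y) KB) :
    ∫ x, ∫ y, |kernelProd μ A B x y - kernelProd μ A' B' x y| ∂μ ∂μ ≤
      4 * a * KB + 4 * b * KA := by
  have hAbd : ∃ a, ∀ x y, |A x y| ≤ a := ⟨a, hAa⟩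
  have hB'bd : ∃ b, ∀ x y, |B' x y| ≤ b := ⟨b, hB'b⟩
  have hdA := exists_abs_sub_le hAbd hA'bd
  have hdB := exists_abs_sub_le hBbd hB'bd
  have hmA : Measurable (uncurry fun x y => A x y - A' x y) := hA.sub hA'
  have hmB : Measurable (uncurry fun x y => B x y - B' x y) := hB.sub hB'
  simp_rw [kernelProd_sub_kernelProd hA hAbd hA' hA'bd hB hBbd hB' hB'bd]
  calc _ ≤ _ := integral_integral_abs_add_le (integrable_kernelProd hA hAbd hmB hdB)
        (integrable_kernelProd hmA hdA hB' hB'bd)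
    _ ≤ _ := add_le_add (integral_integral_abs_kernelProd_le_of_right hA hAa hmB hdB hKB)
        (integral_integral_abs_kernelProd_le_of_left hmA hdA hKA hB' hB'b)

end KernelProd

end MeasureSpace

instance isProbabilityMeasure_restrict_Icc_zero_one :
    IsProbabilityMeasure (volume.restrict (Icc (0 : ℝ) 1)) :=
  ⟨by simp [Real.volume_Icc]⟩

theorem isCutNormBound_cutNorm {U : ℝ → ℝ → ℝ} (hU : ∃ D, ∀ x y, |U x y| ≤ D) :
    IsCutNormBound (volume.restrict (Icc 0 1)) U (cutNorm U) := by
  obtain ⟨D, hD⟩ := hU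
  intro S T hS hT
  rw [Measure.restrict_restrict hS, Measure.restrict_restrict hT]
  refine le_csSup ⟨D, ?_⟩ ⟨S ∩ Icc 0 1, T ∩ Icc 0 1, inter_subset_right, inter_subset_right,
    hS.inter measurableSet_Icc, hT.inter measurableSet_Icc, rfl⟩
  rintro r ⟨S, T, hS, hT, -, -, rfl⟩
  rw [← Measure.restrict_restrict_of_subset hS, ← Measure.restrict_restrict_of_subset hT]
  exact abs_setIntegral_le_of_abs_le (fun x => abs_setIntegral_le_of_abs_le (hD x) T) S

theorem stmt7 (V : ℝ → ℝ → ℝ) (Vn : ℕ → ℝ → ℝ → ℝ)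
    (W : ℝ → ℝ → ℝ) (Wn : ℕ → ℝ → ℝ → ℝ) (C : ℝ)
    (hVmeas : Measurable fun p : ℝ × ℝ => V p.1 p.2)
    (hVnmeas : ∀ n, Measurable fun p : ℝ × ℝ => Vn n p.1 p.2)
    (hWmeas : Measurable fun p : ℝ × ℝ => W p.1 p.2)
    (hWnmeas : ∀ n, Measurable fun p : ℝ × ℝ => Wn n p.1 p.2)
    (hVbd : ∃ D, ∀ x y, |V x y| ≤ D)
    (hWbd : ∃ D, ∀ x y, |W x y| ≤ D)
    (hWnbd : ∀ n, ∃ D, ∀ x y, |Wn n x y| ≤ D)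
    (hVnC : ∀ n x y, |Vn n x y| ≤ C)
    (hVconv : Tendsto (fun n => cutNorm (fun x y => Vn n x y - V x y)) atTop (nhds 0))
    (hWconv : Tendsto (fun n => cutNorm (fun x y => Wn n x y - W x y)) atTop (nhds 0)) :
    Tendsto (fun n => ∫ x in Set.Icc (0:ℝ) 1, ∫ y in Set.Icc (0:ℝ) 1,
      |opProd (Vn n) (Wn n) x y - opProd V W x y|) atTop (nhds 0) := by
  obtain ⟨DW, hDW⟩ := hWbd
  have hbound : ∀ n, ∫ x in Icc (0 : ℝ) 1, ∫ y in Icc (0 : ℝ) 1,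
      |opProd (Vn n) (Wn n) x y - opProd V W x y| ≤
        4 * C * cutNorm (fun x y => Wn n x y - W x y) +
          4 * DW * cutNorm (fun x y => Vn n x y - V x y) := fun n =>
    integral_integral_abs_kernelProd_sub_le (hVnmeas n) (hVnC n) hVmeas hVbd (hWnmeas n) (hWnbd n)
      hWmeas hDW (isCutNormBound_cutNorm (exists_abs_sub_le ⟨C, hVnC n⟩ hVbd))
      (isCutNormBound_cutNorm (exists_abs_sub_le (hWnbd n) ⟨DW, hDW⟩))
  have hlim : Tendsto (fun n => 4 * C * cutNorm (fun x y => Wn n x y - W x y) +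
      4 * DW * cutNorm (fun x y => Vn n x y - V x y)) atTop (nhds 0) := by
    simpa using (hWconv.const_mul (4 * C)).add (hVconv.const_mul (4 * DW))
  exact squeeze_zero (fun n => integral_nonneg fun x => integral_nonneg fun y => abs_nonneg _)
    hbound hlim
end

section
/- Let V, V₁, V₂, … ∈ L^∞([0,1]²) with ‖V‖_∞ ≤ C and ‖Vₙ‖_∞ ≤ C for all n, and W, W₁, W₂, … ∈ L¹([0,1]²). If Vₙ → V in the cut norm and Wₙ → W in L¹, then ⟨Vₙ,Wₙ⟩ → ⟨V,W⟩, where ⟨V,W⟩ = ∫_{[0,1]²} V(x,y)W(x,y)dxdy. -/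
open MeasureTheory Filter

/-- The square `[0,1]²`. -/
noncomputable def unitSq : Set (ℝ × ℝ) := Set.Icc 0 1 ×ˢ Set.Icc 0 1

/-!
Split `∫ Vₙ Wₙ - ∫ V W = ∫ Vₙ (Wₙ - W) + ∫ (Vₙ - V) W`. The first term is at most `C ‖Wₙ - W‖₁`.
For the second, `Uₙ = Vₙ - V` is bounded by `2C` and `∫ Uₙ 1_{S×T}` is bounded by the cut norm of
`Uₙ`, so `∫ Uₙ g → 0` for indicators of rectangles. The bound `|∫ Uₙ g| ≤ 2C ‖g‖₁`, uniform in `n`,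
propagates this first to all measurable sets (Dynkin's π-λ theorem) and then to all integrable `g`
(density of simple functions in `L¹`).
-/

open Set Topology
open scoped NNReal

theorem tendsto_of_uniform_approx {ι κ β : Type*} [PseudoMetricSpace β] {l : Filter ι}
    {p : Filter κ} [p.NeBot] {F : κ → ι → β} {f : ι → β} {δ : κ → ℝ} {y : β}
    (hF : ∀ k, Tendsto (F k) l (𝓝 y)) (hδ : Tendsto δ p (𝓝 0))
    (hdist : ∀ k i, dist (f i) (F k i) ≤ δ k) : Tendsto f l (𝓝 y) := by
  refine TendstoUniformly.tendsto_of_eventually_tendsto (p := p) (L := fun _ => y) ?_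
    (.of_forall hF) tendsto_const_nhds
  rw [Metric.tendstoUniformly_iff]
  intro ε hε
  filter_upwards [hδ.eventually (gt_mem_nhds hε)] with k hk i using (hdist k i).trans_lt hk

section UniformlyBounded

variable {α ι : Type*} [mα : MeasurableSpace α] {μ : Measure α}

theorem norm_integral_mul_le_of_norm_le {G g : α → ℝ} {D : ℝ} (hG : ∀ᵐ x ∂μ, ‖G x‖ ≤ D)
    (hg : Integrable g μ) : ‖∫ x, G x * g x ∂μ‖ ≤ D * ∫ x, ‖g x‖ ∂μ := by
  rw [← integral_const_mul]
  refine norm_integral_le_of_norm_le (hg.norm.const_mul D) (hG.mono fun x hx => ?_)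
  rw [norm_mul]
  exact mul_le_mul_of_nonneg_right hx (norm_nonneg _)

theorem tendsto_integral_mul_of_tendsto {l : Filter ι} {v w : α → ℝ} {vn wn : ι → α → ℝ} {C : ℝ}
    (hvm : AEStronglyMeasurable v μ) (hvnm : ∀ i, AEStronglyMeasurable (vn i) μ)
    (hv : ∀ᵐ x ∂μ, ‖v x‖ ≤ C) (hvn : ∀ i, ∀ᵐ x ∂μ, ‖vn i x‖ ≤ C)
    (hw : Integrable w μ) (hwn : ∀ i, Integrable (wn i) μ)
    (hvconv : Tendsto (fun i => ∫ x, (vn i x - v x) * w x ∂μ) l (𝓝 0))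
    (hwconv : Tendsto (fun i => ∫ x, ‖wn i x - w x‖ ∂μ) l (𝓝 0)) :
    Tendsto (fun i => ∫ x, vn i x * wn i x ∂μ) l (𝓝 (∫ x, v x * w x ∂μ)) := by
  have hwconv' : Tendsto (fun i => ∫ x, vn i x * (wn i x - w x) ∂μ) l (𝓝 0) :=
    squeeze_zero_norm (fun i => norm_integral_mul_le_of_norm_le (hvn i) ((hwn i).sub hw))
      (by simpa using hwconv.const_mul C)
  have hsplit i : ∫ x, vn i x * wn i x ∂μ =
      ((∫ x, vn i x * (wn i x - w x) ∂μ) + ∫ x, (vn i x - v x) * w x ∂μ) + ∫ x, v x * w x ∂μ := by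
    have h₁ : Integrable (fun x => vn i x * (wn i x - w x)) μ :=
      ((hwn i).sub hw).bdd_mul (hvnm i) (hvn i)
    have h₂ : Integrable (fun x => (vn i x - v x) * w x) μ := by
      have h₂' : Integrable (fun x => vn i x * w x - v x * w x) μ :=
        (hw.bdd_mul (hvnm i) (hvn i)).sub (hw.bdd_mul hvm hv)
      simpa only [sub_mul] using h₂'
    have h₁₂ : Integrable (fun x => vn i x * (wn i x - w x) + (vn i x - v x) * w x) μ :=
      h₁.add h₂
    rw [← integral_add h₁ h₂, ← integral_add h₁₂ (hw.bdd_mul hvm hv)]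
    exact integral_congr_ae (ae_of_all _ fun x => by ring)
  simpa [hsplit] using (hwconv'.add hvconv).add_const (∫ x, v x * w x ∂μ)

variable [IsFiniteMeasure μ] {l : Filter ι} {G : ι → α → ℝ} {D : ℝ≥0}

theorem tendsto_setIntegral_of_isPiSystem (hGm : ∀ i, AEStronglyMeasurable (G i) μ)
    (hGD : ∀ i, ∀ᵐ x ∂μ, ‖G i x‖ ≤ D) {P : Set (Set α)}
    (hgen : mα = MeasurableSpace.generateFrom P) (hP : IsPiSystem P)
    (huniv : Tendsto (fun i => ∫ x, G i x ∂μ) l (𝓝 0))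
    (hbasic : ∀ s ∈ P, Tendsto (fun i => ∫ x in s, G i x ∂μ) l (𝓝 0))
    {s : Set α} (hs : MeasurableSet s) : Tendsto (fun i => ∫ x in s, G i x ∂μ) l (𝓝 0) := by
  have hGint i : Integrable (G i) μ := .of_bound (hGm i) D (hGD i)
  induction s, hs using MeasurableSpace.induction_on_inter hgen hP with
  | empty => simpa using tendsto_const_nhds
  | basic t ht => exact hbasic t ht
  | compl t ht iht =>
    simp_rw [setIntegral_compl ht (hGint _)]
    simpa using huniv.sub iht
  | iUnion f hdisj hfm ihf =>
    set A : ℕ → Set α := fun N => ⋃ k ∈ Finset.range N, f k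
    have hA N i : ∫ x in A N, G i x ∂μ = ∑ k ∈ Finset.range N, ∫ x in f k, G i x ∂μ :=
      integral_biUnion_finset _ (fun k _ => hfm k) (fun j _ k _ hjk => hdisj hjk)
        fun k _ => (hGint i).integrableOn
    have htail N : (⋃ k, f k) \ A N ⊆ ⋃ k ≥ N, f k := by
      rintro x ⟨hx, hxA⟩
      obtain ⟨k, hk⟩ := mem_iUnion.1 hx
      exact mem_biUnion (not_lt.1 fun h => hxA (mem_biUnion (Finset.mem_range.2 h) hk)) hk
    refine tendsto_of_uniform_approx (p := atTop)
      (F := fun N i => ∫ x in A N, G i x ∂μ) (δ := fun N => D * μ.real (⋃ k ≥ N, f k))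
      (fun N => by simpa [hA] using tendsto_finsetSum (Finset.range N) fun k _ => ihf k)
      ?_ fun N i => ?_
    · have := (ENNReal.tendsto_toReal ENNReal.zero_ne_top).comp
        (tendsto_measure_biUnion_Ici_zero_of_pairwise_disjoint (μ := μ)
          (fun k => (hfm k).nullMeasurableSet) hdisj)
      simpa [measureReal_def] using this.const_mul (D : ℝ)
    · have hAU : (⋃ k, f k) ∩ A N = A N :=
        inter_eq_right.2 (iUnion₂_subset fun k _ => subset_iUnion f k)
      rw [Real.dist_eq, ← integral_inter_add_sdiff
        ((Finset.range N).measurableSet_biUnion fun k _ => hfm k) (hGint i).integrableOn, hAU,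
        add_sub_cancel_left, ← Real.norm_eq_abs]
      calc ‖∫ x in (⋃ k, f k) \ A N, G i x ∂μ‖
          ≤ D * μ.real ((⋃ k, f k) \ A N) :=
            norm_setIntegral_le_of_norm_le_const_ae (measure_lt_top _ _)
              (ae_restrict_of_ae (hGD i))
        _ ≤ D * μ.real (⋃ k ≥ N, f k) :=
            mul_le_mul_of_nonneg_left (measureReal_mono (htail N) (measure_ne_top _ _)) D.2

theorem tendsto_integral_mul_of_isPiSystem (hGm : ∀ i, AEStronglyMeasurable (G i) μ)
    (hGD : ∀ i, ∀ᵐ x ∂μ, ‖G i x‖ ≤ D) {P : Set (Set α)}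
    (hgen : mα = MeasurableSpace.generateFrom P) (hP : IsPiSystem P)
    (huniv : Tendsto (fun i => ∫ x, G i x ∂μ) l (𝓝 0))
    (hbasic : ∀ s ∈ P, Tendsto (fun i => ∫ x in s, G i x ∂μ) l (𝓝 0))
    {g : α → ℝ} (hg : Integrable g μ) : Tendsto (fun i => ∫ x, G i x * g x ∂μ) l (𝓝 0) := by
  have hGgint i {g : α → ℝ} (hg : Integrable g μ) : Integrable (fun x => G i x * g x) μ :=
    hg.bdd_mul (hGm i) (hGD i)
  refine Integrable.induction _ (fun c s hs _ => ?_) (fun f g _ hf hg hPf hPg => ?_) ?_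
    (fun f g hfg _ hPf => ?_) hg
  · simp_rw [← indicator_mul_right, integral_indicator hs, integral_mul_const]
    simpa using (tendsto_setIntegral_of_isPiSystem hGm hGD hgen hP huniv hbasic hs).mul_const c
  · simp_rw [Pi.add_apply, mul_add, integral_add (hGgint _ hf) (hGgint _ hg)]
    simpa using hPf.add hPg
  · have hLip i : LipschitzWith D fun g : α →₁[μ] ℝ => ∫ x, G i x * g x ∂μ := by
      refine .of_dist_le_mul fun g h => ?_
      rw [Real.dist_eq, ← integral_sub (hGgint i (L1.integrable_coeFn g))
        (hGgint i (L1.integrable_coeFn h)), L1.dist_eq_integral_dist]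
      simp_rw [← mul_sub, Real.dist_eq]
      exact norm_integral_mul_le_of_norm_le (hGD i)
        ((L1.integrable_coeFn g).sub (L1.integrable_coeFn h))
    exact (LipschitzWith.uniformEquicontinuous _ D hLip).equicontinuous
      |>.isClosed_setOfPred_tendsto continuous_const
  · exact hPf.congr fun i => integral_congr_ae (hfg.mono fun x hx => by rw [hx])

end UniformlyBounded

theorem abs_iterated_setIntegral_le {U : ℝ → ℝ → ℝ} {D : ℝ} (hU : ∀ x y, |U x y| ≤ D)
    {S T : Set ℝ} (hS : S ⊆ Icc 0 1) (hT : T ⊆ Icc 0 1) :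
    |∫ x in S, ∫ y in T, U x y| ≤ D := by
  have hD : 0 ≤ D := (abs_nonneg _).trans (hU 0 0)
  have hvol {A : Set ℝ} (hA : A ⊆ Icc 0 1) : volume.real A ≤ 1 := by
    simpa using measureReal_mono (μ := volume) hA (by simp)
  have hinner x : ‖∫ y in T, U x y‖ ≤ D :=
    (norm_setIntegral_le_of_norm_le_const (measure_lt_top_of_subset hT measure_Icc_lt_top.ne)
      fun y _ => hU x y).trans (mul_le_of_le_one_right hD (hvol hT))
  exact (norm_setIntegral_le_of_norm_le_const (measure_lt_top_of_subset hS measure_Icc_lt_top.ne)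
    fun x _ => hinner x).trans (mul_le_of_le_one_right hD (hvol hS))

theorem abs_iterated_setIntegral_le_cutNorm {U : ℝ → ℝ → ℝ} {D : ℝ} (hU : ∀ x y, |U x y| ≤ D)
    {S T : Set ℝ} (hS : S ⊆ Icc 0 1) (hT : T ⊆ Icc 0 1) (hSm : MeasurableSet S)
    (hTm : MeasurableSet T) : |∫ x in S, ∫ y in T, U x y| ≤ cutNorm U :=
  le_csSup
    ⟨D, by rintro _ ⟨S', T', hS', hT', -, -, rfl⟩; exact abs_iterated_setIntegral_le hU hS' hT'⟩
    ⟨S, T, hS, hT, hSm, hTm, rfl⟩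

theorem setIntegral_prod_restrict_unitSq {U : ℝ → ℝ → ℝ} {D : ℝ}
    (hUm : Measurable fun p : ℝ × ℝ => U p.1 p.2) (hU : ∀ x y, |U x y| ≤ D) {S T : Set ℝ}
    (hSm : MeasurableSet S) (hTm : MeasurableSet T) :
    ∫ p in S ×ˢ T, U p.1 p.2 ∂volume.restrict unitSq =
      ∫ x in S ∩ Icc 0 1, ∫ y in T ∩ Icc 0 1, U x y := by
  rw [Measure.restrict_restrict (hSm.prod hTm), unitSq, prod_inter_prod, Measure.volume_eq_prod]
  refine setIntegral_prod (fun p : ℝ × ℝ => U p.1 p.2) (Measure.integrableOn_of_bounded ?_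
    hUm.aestronglyMeasurable (ae_of_all _ fun p => hU p.1 p.2))
  exact measure_ne_top_of_subset (prod_mono inter_subset_right inter_subset_right)
    (isCompact_Icc.prod isCompact_Icc).measure_lt_top.ne

theorem tendsto_integral_mul_of_tendsto_cutNorm {ι : Type*} {l : Filter ι}
    {U : ι → ℝ → ℝ → ℝ} {D : ℝ} (hUm : ∀ i, Measurable fun p : ℝ × ℝ => U i p.1 p.2)
    (hU : ∀ i x y, |U i x y| ≤ D) (hcut : Tendsto (fun i => cutNorm (U i)) l (𝓝 0))
    {g : ℝ × ℝ → ℝ} (hg : IntegrableOn g unitSq) :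
    Tendsto (fun i => ∫ p in unitSq, U i p.1 p.2 * g p) l (𝓝 0) := by
  have : IsFiniteMeasure (volume.restrict unitSq) :=
    isFiniteMeasure_restrict.2 (isCompact_Icc.prod isCompact_Icc).measure_lt_top.ne
  have hrect {S T : Set ℝ} (hSm : MeasurableSet S) (hTm : MeasurableSet T) :
      Tendsto (fun i => ∫ p in S ×ˢ T, U i p.1 p.2 ∂volume.restrict unitSq) l (𝓝 0) := by
    refine squeeze_zero_norm (fun i => ?_) hcut
    rw [setIntegral_prod_restrict_unitSq (hUm i) (hU i) hSm hTm, Real.norm_eq_abs]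
    exact abs_iterated_setIntegral_le_cutNorm (hU i) inter_subset_right inter_subset_right
      (hSm.inter measurableSet_Icc) (hTm.inter measurableSet_Icc)
  refine tendsto_integral_mul_of_isPiSystem (D := D.toNNReal)
    (fun i => (hUm i).aestronglyMeasurable)
    (fun i => ae_of_all _ fun p => (hU i p.1 p.2).trans D.le_coe_toNNReal)
    generateFrom_prod.symm isPiSystem_prod ?_ ?_ hg
  · simpa using hrect MeasurableSet.univ MeasurableSet.univ
  · rintro _ ⟨S, hSm, T, hTm, rfl⟩
    exact hrect hSm hTm

theorem stmt8 (V : ℝ → ℝ → ℝ) (Vn : ℕ → ℝ → ℝ → ℝ)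
    (W : ℝ → ℝ → ℝ) (Wn : ℕ → ℝ → ℝ → ℝ) (C : ℝ)
    (hVmeas : Measurable fun p : ℝ × ℝ => V p.1 p.2)
    (hVnmeas : ∀ n, Measurable fun p : ℝ × ℝ => Vn n p.1 p.2)
    (hVC : ∀ x y, |V x y| ≤ C)
    (hVnC : ∀ n x y, |Vn n x y| ≤ C)
    (hWint : IntegrableOn (fun p : ℝ × ℝ => W p.1 p.2) unitSq)
    (hWnint : ∀ n, IntegrableOn (fun p : ℝ × ℝ => Wn n p.1 p.2) unitSq)
    (hVconv : Tendsto (fun n => cutNorm (fun x y => Vn n x y - V x y)) atTop (nhds 0))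
    (hWconv : Tendsto (fun n => ∫ p in unitSq, |Wn n p.1 p.2 - W p.1 p.2|) atTop (nhds 0)) :
    Tendsto (fun n => ∫ p in unitSq, Vn n p.1 p.2 * Wn n p.1 p.2) atTop
      (nhds (∫ p in unitSq, V p.1 p.2 * W p.1 p.2)) := by
  have hdiff n x y : |Vn n x y - V x y| ≤ C + C :=
    (abs_sub _ _).trans (add_le_add (hVnC n x y) (hVC x y))
  refine tendsto_integral_mul_of_tendsto hVmeas.aestronglyMeasurable
    (fun n => (hVnmeas n).aestronglyMeasurable) (ae_of_all _ fun p => hVC p.1 p.2)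
    (fun n => ae_of_all _ fun p => hVnC n p.1 p.2) hWint hWnint ?_ (by simpa using hWconv)
  exact tendsto_integral_mul_of_tendsto_cutNorm (fun n => (hVnmeas n).sub hVmeas) hdiff hVconv
    hWint
end

section
/- Suppose W : [0,1]² → ℝ is P-measurable for a finite measurable partition P of [0,1] (i.e., constant on each product S×T with S,T ∈ P). Then the cut norm of W equals the maximum over subfamilies S, T ⊆ P of |∫_{(∪S)×(∪T)} W(s,t)dsdt|. -/
/-!
For measurable `S, T ⊆ [0,1]` the integral of `W` over `S × T` is the bilinear form
`∑_{A,B} w_{AB} |S ∩ A| |T ∩ B|` evaluated at the vectors `(|S ∩ A|)_A` and `(|T ∩ B|)_B`,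
which range over the boxes `∏_A [0, |A|]`. The absolute value of a linear form on such a box is
maximised at a vertex (keep exactly the coordinates whose coefficient has the sign of the value),
so doing this in each variable in turn replaces `S` and `T` by unions of blocks without
decreasing `|∫_{S×T} W|`.
-/

open MeasureTheory

/-- `P` is a finite measurable partition of `[0,1]` into sets of positive measure. -/
def IsPartition (P : Finset (Set ℝ)) : Prop :=
  (∀ S ∈ P, MeasurableSet S ∧ 0 < volume S) ∧
  (⋃₀ (P : Set (Set ℝ))) = Set.Icc 0 1 ∧
  ∀ S ∈ P, ∀ T ∈ P, S ≠ T → Disjoint S T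

namespace Finset

variable {ι κ : Type*}

theorem sum_mul_le_sum_filter_nonneg_mul (s : Finset ι) (a c φ : ι → ℝ)
    (ha : ∀ i ∈ s, 0 ≤ a i) (hac : ∀ i ∈ s, a i ≤ c i) :
    ∑ i ∈ s, a i * φ i ≤ ∑ i ∈ s with 0 ≤ φ i, c i * φ i := by
  rw [sum_filter]
  refine sum_le_sum fun i hi => ?_
  split_ifs with hφ
  · exact mul_le_mul_of_nonneg_right (hac i hi) hφ
  · exact mul_nonpos_of_nonneg_of_nonpos (ha i hi) (not_le.mp hφ).le

theorem exists_subset_abs_sum_mul_le (s : Finset ι) (a c φ : ι → ℝ)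
    (ha : ∀ i ∈ s, 0 ≤ a i) (hac : ∀ i ∈ s, a i ≤ c i) :
    ∃ t ⊆ s, |∑ i ∈ s, a i * φ i| ≤ |∑ i ∈ t, c i * φ i| := by
  rcases le_total 0 (∑ i ∈ s, a i * φ i) with h | h
  · refine ⟨_, filter_subset (fun i => 0 ≤ φ i) s, ?_⟩
    rw [abs_of_nonneg h]
    exact (sum_mul_le_sum_filter_nonneg_mul s a c φ ha hac).trans (le_abs_self _)
  · refine ⟨_, filter_subset (fun i => 0 ≤ -φ i) s, ?_⟩
    have hneg := sum_mul_le_sum_filter_nonneg_mul s a c (fun i => -φ i) ha hac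
    simp only [mul_neg, sum_neg_distrib, neg_le_neg_iff] at hneg
    rw [abs_of_nonpos h]
    exact (neg_le_neg hneg).trans (neg_le_abs _)

theorem sum_mul_sum_mul_comm (s : Finset ι) (t : Finset κ) (a : ι → ℝ) (b : κ → ℝ)
    (w : ι → κ → ℝ) :
    ∑ i ∈ s, a i * ∑ j ∈ t, b j * w i j = ∑ j ∈ t, b j * ∑ i ∈ s, a i * w i j := by
  simp only [mul_sum]
  rw [sum_comm]
  exact sum_congr rfl fun _ _ => sum_congr rfl fun _ _ => by ring

theorem exists_subsets_abs_sum_bilinear_le (s : Finset ι) (t : Finset κ) (a c : ι → ℝ)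
    (b d : κ → ℝ) (w : ι → κ → ℝ) (ha : ∀ i ∈ s, 0 ≤ a i) (hac : ∀ i ∈ s, a i ≤ c i)
    (hb : ∀ j ∈ t, 0 ≤ b j) (hbd : ∀ j ∈ t, b j ≤ d j) :
    ∃ s' ⊆ s, ∃ t' ⊆ t, |∑ i ∈ s, a i * ∑ j ∈ t, b j * w i j| ≤
      |∑ i ∈ s', c i * ∑ j ∈ t', d j * w i j| := by
  obtain ⟨s', hs', h₁⟩ := exists_subset_abs_sum_mul_le s a c _ ha hac
  obtain ⟨t', ht', h₂⟩ :=
    exists_subset_abs_sum_mul_le t b d (fun j => ∑ i ∈ s', c i * w i j) hb hbd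
  refine ⟨s', hs', t', ht', ?_⟩
  calc |∑ i ∈ s, a i * ∑ j ∈ t, b j * w i j|
      ≤ |∑ i ∈ s', c i * ∑ j ∈ t, b j * w i j| := h₁
    _ = |∑ j ∈ t, b j * ∑ i ∈ s', c i * w i j| := by rw [sum_mul_sum_mul_comm]
    _ ≤ |∑ j ∈ t', d j * ∑ i ∈ s', c i * w i j| := h₂
    _ = |∑ i ∈ s', c i * ∑ j ∈ t', d j * w i j| := by rw [sum_mul_sum_mul_comm]

end Finset

structure IsDisjointFiniteMeasureFamily {α : Type*} [MeasurableSpace α] (μ : Measure α)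
    (P : Finset (Set α)) : Prop where
  measurableSet : ∀ A ∈ P, MeasurableSet A
  pairwiseDisjoint : (P : Set (Set α)).PairwiseDisjoint id
  measure_ne_top : ∀ A ∈ P, μ A ≠ ⊤

namespace IsDisjointFiniteMeasureFamily

variable {α β : Type*} [MeasurableSpace α] [MeasurableSpace β] {μ : Measure α} {ν : Measure β}
  {P 𝒮 : Finset (Set α)} {Q : Finset (Set β)}

theorem mono (hP : IsDisjointFiniteMeasureFamily μ P) (h𝒮 : 𝒮 ⊆ P) :
    IsDisjointFiniteMeasureFamily μ 𝒮 :=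
  ⟨fun A hA => hP.measurableSet A (h𝒮 hA), hP.pairwiseDisjoint.subset (by exact_mod_cast h𝒮),
    fun A hA => hP.measure_ne_top A (h𝒮 hA)⟩

theorem measurableSet_sUnion (hP : IsDisjointFiniteMeasureFamily μ P) :
    MeasurableSet (⋃₀ (P : Set (Set α))) :=
  P.finite_toSet.measurableSet_sUnion hP.measurableSet

theorem setIntegral_eq_sum (hP : IsDisjointFiniteMeasureFamily μ P) {S : Set α}
    (hS : MeasurableSet S) (hSP : S ⊆ ⋃₀ (P : Set (Set α))) {f : α → ℝ} {g : Set α → ℝ}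
    (hf : ∀ A ∈ P, ∀ x ∈ A, f x = g A) :
    ∫ x in S, f x ∂μ = ∑ A ∈ P, μ.real (S ∩ A) * g A := by
  have hpiece : ∀ A ∈ P, MeasurableSet (S ∩ A) := fun A hA => hS.inter (hP.measurableSet A hA)
  have hconst : ∀ A ∈ P, Set.EqOn f (fun _ => g A) (S ∩ A) := fun A hA x hx => hf A hA x hx.2
  have hcover : S = ⋃ A ∈ P, S ∩ A := by
    rw [← Set.inter_iUnion₂, ← Finset.set_biUnion_coe, ← Set.sUnion_eq_biUnion,
      Set.inter_eq_left.mpr hSP]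
  have hint : ∀ A ∈ P, IntegrableOn f (S ∩ A) μ := fun A hA =>
    (integrableOn_const (measure_ne_top_of_subset Set.inter_subset_right
      (hP.measure_ne_top A hA))).congr_fun (hconst A hA).symm (hpiece A hA)
  conv_lhs => rw [hcover]
  rw [integral_biUnion_finset P hpiece
    (fun A hA B hB hAB => (hP.pairwiseDisjoint hA hB hAB).mono inf_le_right inf_le_right) hint]
  refine Finset.sum_congr rfl fun A hA => ?_
  rw [setIntegral_congr_fun (hpiece A hA) (hconst A hA), setIntegral_const, smul_eq_mul]

variable {S : Set α} {T : Set β} {W : α → β → ℝ} {w : Set α → Set β → ℝ}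

theorem setIntegral_setIntegral_eq_sum (hP : IsDisjointFiniteMeasureFamily μ P)
    (hQ : IsDisjointFiniteMeasureFamily ν Q) (hS : MeasurableSet S)
    (hSP : S ⊆ ⋃₀ (P : Set (Set α))) (hT : MeasurableSet T) (hTQ : T ⊆ ⋃₀ (Q : Set (Set β)))
    (hW : ∀ A ∈ P, ∀ B ∈ Q, ∀ x ∈ A, ∀ y ∈ B, W x y = w A B) :
    ∫ x in S, ∫ y in T, W x y ∂ν ∂μ =
      ∑ A ∈ P, μ.real (S ∩ A) * ∑ B ∈ Q, ν.real (T ∩ B) * w A B :=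
  hP.setIntegral_eq_sum hS hSP fun A hA x hx =>
    hQ.setIntegral_eq_sum hT hTQ fun B hB y hy => hW A hA B hB x hx y hy

theorem setIntegral_sUnion_setIntegral_sUnion_eq_sum (hP : IsDisjointFiniteMeasureFamily μ P)
    (hQ : IsDisjointFiniteMeasureFamily ν Q)
    (hW : ∀ A ∈ P, ∀ B ∈ Q, ∀ x ∈ A, ∀ y ∈ B, W x y = w A B) :
    ∫ x in ⋃₀ (P : Set (Set α)), ∫ y in ⋃₀ (Q : Set (Set β)), W x y ∂ν ∂μ =
      ∑ A ∈ P, μ.real A * ∑ B ∈ Q, ν.real B * w A B := by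
  rw [hP.setIntegral_setIntegral_eq_sum hQ hP.measurableSet_sUnion subset_rfl
    hQ.measurableSet_sUnion subset_rfl hW]
  refine Finset.sum_congr rfl fun A hA => ?_
  rw [Set.inter_eq_right.mpr (Set.subset_sUnion_of_mem hA)]
  refine congrArg _ (Finset.sum_congr rfl fun B hB => ?_)
  rw [Set.inter_eq_right.mpr (Set.subset_sUnion_of_mem hB)]

theorem exists_subfamilies_abs_setIntegral_le (hP : IsDisjointFiniteMeasureFamily μ P)
    (hQ : IsDisjointFiniteMeasureFamily ν Q) (hS : MeasurableSet S)
    (hSP : S ⊆ ⋃₀ (P : Set (Set α))) (hT : MeasurableSet T) (hTQ : T ⊆ ⋃₀ (Q : Set (Set β)))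
    (hW : ∀ A ∈ P, ∀ B ∈ Q, ∀ x ∈ A, ∀ y ∈ B, W x y = w A B) :
    ∃ 𝒮 ⊆ P, ∃ 𝒯 ⊆ Q, |∫ x in S, ∫ y in T, W x y ∂ν ∂μ| ≤
      |∫ x in ⋃₀ (𝒮 : Set (Set α)), ∫ y in ⋃₀ (𝒯 : Set (Set β)), W x y ∂ν ∂μ| := by
  obtain ⟨𝒮, h𝒮, 𝒯, h𝒯, hle⟩ := Finset.exists_subsets_abs_sum_bilinear_le P Q
    (fun A => μ.real (S ∩ A)) (fun A => μ.real A) (fun B => ν.real (T ∩ B)) (fun B => ν.real B) w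
    (fun _ _ => measureReal_nonneg)
    (fun A hA => measureReal_mono Set.inter_subset_right (hP.measure_ne_top A hA))
    (fun _ _ => measureReal_nonneg)
    (fun B hB => measureReal_mono Set.inter_subset_right (hQ.measure_ne_top B hB))
  refine ⟨𝒮, h𝒮, 𝒯, h𝒯, ?_⟩
  rwa [hP.setIntegral_setIntegral_eq_sum hQ hS hSP hT hTQ hW,
    (hP.mono h𝒮).setIntegral_sUnion_setIntegral_sUnion_eq_sum (hQ.mono h𝒯)
      fun A hA B hB => hW A (h𝒮 hA) B (h𝒯 hB)]

end IsDisjointFiniteMeasureFamily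

theorem stmt10_general (P : Finset (Set ℝ)) (hP : IsPartition P) (W : ℝ → ℝ → ℝ)
    (hWstep : ∀ S ∈ P, ∀ T ∈ P, ∀ x ∈ S, ∀ x' ∈ S, ∀ y ∈ T, ∀ y' ∈ T,
      W x y = W x' y') :
    cutNorm W = sSup {r : ℝ | ∃ 𝒮 𝒯 : Finset (Set ℝ), 𝒮 ⊆ P ∧ 𝒯 ⊆ P ∧
      r = |∫ x in ⋃₀ (𝒮 : Set (Set ℝ)), ∫ y in ⋃₀ (𝒯 : Set (Set ℝ)), W x y|} := by
  obtain ⟨hPm, hPcover, hPd⟩ := hP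
  have hPfam : IsDisjointFiniteMeasureFamily volume P :=
    ⟨fun A hA => (hPm A hA).1, hPd, fun A hA => measure_ne_top_of_subset
      (hPcover ▸ Set.subset_sUnion_of_mem hA) measure_Icc_lt_top.ne⟩
  have hW : ∀ A ∈ P, ∀ B ∈ P, ∀ x ∈ A, ∀ y ∈ B,
      W x y = W (Classical.epsilon (· ∈ A)) (Classical.epsilon (· ∈ B)) :=
    fun A hA B hB x hx y hy => hWstep A hA B hB x hx _ (Classical.epsilon_spec ⟨x, hx⟩)
      y hy _ (Classical.epsilon_spec ⟨y, hy⟩)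
  have hsub : ∀ 𝒮 ⊆ P, ⋃₀ (𝒮 : Set (Set ℝ)) ⊆ Set.Icc 0 1 := fun 𝒮 h𝒮 =>
    hPcover ▸ Set.sUnion_mono (by exact_mod_cast h𝒮)
  apply csSup_eq_csSup_of_forall_exists_le
  · rintro _ ⟨S, T, hS, hT, hSm, hTm, rfl⟩
    obtain ⟨𝒮, h𝒮, 𝒯, h𝒯, hle⟩ := hPfam.exists_subfamilies_abs_setIntegral_le hPfam
      hSm (hPcover ▸ hS) hTm (hPcover ▸ hT) hW
    exact ⟨_, ⟨𝒮, 𝒯, h𝒮, h𝒯, rfl⟩, hle⟩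
  · rintro _ ⟨𝒮, 𝒯, h𝒮, h𝒯, rfl⟩
    exact ⟨_, ⟨_, _, hsub 𝒮 h𝒮, hsub 𝒯 h𝒯, (hPfam.mono h𝒮).measurableSet_sUnion,
      (hPfam.mono h𝒯).measurableSet_sUnion, rfl⟩, le_rfl⟩

theorem stmt10 (P : Finset (Set ℝ)) (hP : IsPartition P) (W : ℝ → ℝ → ℝ)
    (hWmeas : Measurable fun p : ℝ × ℝ => W p.1 p.2)
    (hWint : IntegrableOn (fun p : ℝ × ℝ => W p.1 p.2) (Set.Icc 0 1 ×ˢ Set.Icc 0 1))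
    (hWstep : ∀ S ∈ P, ∀ T ∈ P, ∀ x ∈ S, ∀ x' ∈ S, ∀ y ∈ T, ∀ y' ∈ T,
      W x y = W x' y') :
    cutNorm W = sSup {r : ℝ | ∃ 𝒮 𝒯 : Finset (Set ℝ), 𝒮 ⊆ P ∧ 𝒯 ⊆ P ∧
      r = |∫ x in ⋃₀ (𝒮 : Set (Set ℝ)), ∫ y in ⋃₀ (𝒯 : Set (Set ℝ)), W x y|} :=
  stmt10_general P hP W hWstep
end

section
/- Let W₁, W₂ : [0,1]² → ℝ be integrable, and suppose W₂ is P-measurable for a finite measurable partition P of [0,1]. Then ‖W₁ − S_P W₁‖_□ ≤ 2‖W₁ − W₂‖_□, where S_P W₁ is the stepping of W₁ along P. -/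
open MeasureTheory

open Classical in
/-- The stepping of a kernel along a finite partition `P`. -/
noncomputable def stepping (P : Finset (Set ℝ)) (W : ℝ → ℝ → ℝ) (x y : ℝ) : ℝ :=
  ∑ S ∈ P, ∑ T ∈ P,
    if x ∈ S ∧ y ∈ T then
      (∫ s in S, ∫ t in T, W s t) / ((volume S).toReal * (volume T).toReal)
    else 0

/-!
Write `U = W₁ - W₂`. On `[0,1]²` stepping is linear and fixes the step function `W₂`, so
`W₁ - S_P W₁ = U - S_P U` there, and it suffices that stepping does not increase the cut norm.
For `S, T ⊆ [0,1]` one computes `∫_{S×T} S_P U = ∑_{A,B ∈ P} λ_A μ_B ∫_{A×B} U` with weights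
`λ_A = |A ∩ S| / |A|` and `μ_B = |B ∩ T| / |B|` in `[0,1]`. This is affine in each weight, so
its absolute value is at most that of a 0/1 choice of weights, i.e. of
`∑_{A ∈ Q, B ∈ R} ∫_{A×B} U = ∫_{⋃Q × ⋃R} U` for some `Q, R ⊆ P`, which is bounded by `‖U‖_□`.
-/

theorem exists_subset_abs_sum_mul_le {ι : Type*} (s : Finset ι) (c f : ι → ℝ)
    (hc : ∀ i ∈ s, c i ∈ Set.Icc (0 : ℝ) 1) :
    ∃ t ⊆ s, |∑ i ∈ s, c i * f i| ≤ |∑ i ∈ t, f i| := by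
  classical
  have upper : ∑ i ∈ s, c i * f i ≤ ∑ i ∈ s with 0 ≤ f i, f i := by
    rw [Finset.sum_filter]
    refine Finset.sum_le_sum fun i hi => ?_
    obtain ⟨h0, h1⟩ := hc i hi
    split_ifs <;> nlinarith
  have lower : ∑ i ∈ s with f i < 0, f i ≤ ∑ i ∈ s, c i * f i := by
    rw [Finset.sum_filter]
    refine Finset.sum_le_sum fun i hi => ?_
    obtain ⟨h0, h1⟩ := hc i hi
    split_ifs <;> nlinarith
  have hpos : 0 ≤ ∑ i ∈ s with 0 ≤ f i, f i :=
    Finset.sum_nonneg fun i hi => (Finset.mem_filter.1 hi).2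
  have hneg : ∑ i ∈ s with f i < 0, f i ≤ 0 :=
    Finset.sum_nonpos fun i hi => (Finset.mem_filter.1 hi).2.le
  rcases le_total (-∑ i ∈ s with f i < 0, f i) (∑ i ∈ s with 0 ≤ f i, f i) with h | h
  · exact ⟨_, Finset.filter_subset _ s,
      (abs_le.2 ⟨by linarith, upper⟩).trans (le_abs_self _)⟩
  · exact ⟨_, Finset.filter_subset _ s,
      (abs_le.2 ⟨by linarith, by linarith⟩).trans (neg_le_abs _)⟩

theorem exists_subsets_abs_sum_sum_mul_le {ι κ : Type*} (s : Finset ι) (t : Finset κ)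
    (a : ι → ℝ) (b : κ → ℝ) (f : ι → κ → ℝ)
    (ha : ∀ i ∈ s, a i ∈ Set.Icc (0 : ℝ) 1) (hb : ∀ j ∈ t, b j ∈ Set.Icc (0 : ℝ) 1) :
    ∃ s' ⊆ s, ∃ t' ⊆ t,
      |∑ i ∈ s, ∑ j ∈ t, a i * b j * f i j| ≤ |∑ i ∈ s', ∑ j ∈ t', f i j| := by
  obtain ⟨s', hs', h₁⟩ := exists_subset_abs_sum_mul_le s a (fun i => ∑ j ∈ t, b j * f i j) ha
  obtain ⟨t', ht', h₂⟩ :=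
    exists_subset_abs_sum_mul_le t b (fun j => ∑ i ∈ s', f i j) hb
  refine ⟨s', hs', t', ht', ?_⟩
  calc |∑ i ∈ s, ∑ j ∈ t, a i * b j * f i j|
      = |∑ i ∈ s, a i * ∑ j ∈ t, b j * f i j| := by simp only [Finset.mul_sum, mul_assoc]
    _ ≤ |∑ i ∈ s', ∑ j ∈ t, b j * f i j| := h₁
    _ = |∑ j ∈ t, b j * ∑ i ∈ s', f i j| := by rw [Finset.sum_comm]; simp only [Finset.mul_sum]
    _ ≤ |∑ j ∈ t', ∑ i ∈ s', f i j| := h₂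
    _ = |∑ i ∈ s', ∑ j ∈ t', f i j| := by rw [Finset.sum_comm]

theorem setIntegral_biUnion_prod_biUnion {α β E : Type*} [MeasurableSpace α] [MeasurableSpace β]
    [NormedAddCommGroup E] [NormedSpace ℝ E] {μ : Measure (α × β)} {f : α × β → E}
    {Q : Finset (Set α)} {R : Finset (Set β)}
    (hQm : ∀ A ∈ Q, MeasurableSet A) (hQd : (Q : Set (Set α)).Pairwise Disjoint)
    (hRm : ∀ B ∈ R, MeasurableSet B) (hRd : (R : Set (Set β)).Pairwise Disjoint)
    (hf : IntegrableOn f ((⋃ A ∈ Q, A) ×ˢ (⋃ B ∈ R, B)) μ) :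
    ∫ p in (⋃ A ∈ Q, A) ×ˢ (⋃ B ∈ R, B), f p ∂μ = ∑ A ∈ Q, ∑ B ∈ R, ∫ p in A ×ˢ B, f p ∂μ := by
  have hblock : ∀ A ∈ Q, ∀ B ∈ R, A ×ˢ B ⊆ (⋃ A ∈ Q, A) ×ˢ (⋃ B ∈ R, B) := fun A hA B hB =>
    Set.prod_mono (Finset.subset_set_biUnion_of_mem (f := id) hA) (Finset.subset_set_biUnion_of_mem (f := id) hB)
  rw [Set.iUnion₂_prod_const, integral_biUnion_finset Q
    (fun A hA => (hQm A hA).prod (R.measurableSet_biUnion hRm))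
    (fun A hA A' hA' h => Set.disjoint_prod.2 (Or.inl (hQd hA hA' h)))
    (fun A hA => hf.mono_set (Set.prod_mono (Finset.subset_set_biUnion_of_mem (f := id) hA) subset_rfl))]
  refine Finset.sum_congr rfl fun A hA => ?_
  rw [Set.prod_iUnion₂, integral_biUnion_finset R (fun B hB => (hQm A hA).prod (hRm B hB))
    (fun B hB B' hB' h => Set.disjoint_prod.2 (Or.inr (hRd hB hB' h)))
    (fun B hB => hf.mono_set (hblock A hA B hB))]

theorem volume_prod_ne_top_of_subset_Icc {S T : Set ℝ} (hS : S ⊆ Set.Icc 0 1)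
    (hT : T ⊆ Set.Icc 0 1) : volume (S ×ˢ T) ≠ ⊤ :=
  ne_top_of_le_ne_top (isCompact_Icc.prod isCompact_Icc).measure_lt_top.ne
    (measure_mono (Set.prod_mono hS hT))

theorem integral_integral_eq_setIntegral_prod {W : ℝ → ℝ → ℝ} {S T : Set ℝ}
    (hW : IntegrableOn (fun p : ℝ × ℝ => W p.1 p.2) (S ×ˢ T)) :
    ∫ x in S, ∫ y in T, W x y = ∫ p in S ×ˢ T, W p.1 p.2 := by
  rw [Measure.volume_eq_prod] at hW ⊢
  exact (setIntegral_prod _ hW).symm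

theorem integral_integral_sub_of_integrableOn {f g : ℝ → ℝ → ℝ} {S T : Set ℝ}
    (hf : IntegrableOn (fun p : ℝ × ℝ => f p.1 p.2) (S ×ˢ T))
    (hg : IntegrableOn (fun p : ℝ × ℝ => g p.1 p.2) (S ×ˢ T)) :
    ∫ x in S, ∫ y in T, (f x y - g x y) =
      (∫ x in S, ∫ y in T, f x y) - ∫ x in S, ∫ y in T, g x y := by
  rw [integral_integral_eq_setIntegral_prod hf, integral_integral_eq_setIntegral_prod hg,
    integral_integral_eq_setIntegral_prod (W := fun x y => f x y - g x y) (hf.sub hg),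
    integral_sub hf hg]

theorem abs_integral_integral_le_integral_abs {W : ℝ → ℝ → ℝ} {S T : Set ℝ}
    (hW : IntegrableOn (fun p : ℝ × ℝ => W p.1 p.2) (Set.Icc 0 1 ×ˢ Set.Icc 0 1))
    (hS : S ⊆ Set.Icc 0 1) (hT : T ⊆ Set.Icc 0 1) :
    |∫ x in S, ∫ y in T, W x y| ≤ ∫ p in Set.Icc 0 1 ×ˢ Set.Icc 0 1, |W p.1 p.2| := by
  rw [integral_integral_eq_setIntegral_prod (hW.mono_set (Set.prod_mono hS hT))]
  calc _ ≤ ∫ p in S ×ˢ T, |W p.1 p.2| := abs_integral_le_integral_abs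
    _ ≤ _ := setIntegral_mono_set hW.abs (ae_of_all _ fun p => abs_nonneg _)
        (Set.prod_mono hS hT).eventuallyLE

theorem abs_integral_integral_le_cutNorm {W : ℝ → ℝ → ℝ} {S T : Set ℝ}
    (hW : IntegrableOn (fun p : ℝ × ℝ => W p.1 p.2) (Set.Icc 0 1 ×ˢ Set.Icc 0 1))
    (hS : S ⊆ Set.Icc 0 1) (hT : T ⊆ Set.Icc 0 1) (hSm : MeasurableSet S)
    (hTm : MeasurableSet T) :
    |∫ x in S, ∫ y in T, W x y| ≤ cutNorm W := by
  refine le_csSup ⟨∫ p in Set.Icc 0 1 ×ˢ Set.Icc 0 1, |W p.1 p.2|, ?_⟩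
    ⟨S, T, hS, hT, hSm, hTm, rfl⟩
  rintro r ⟨S', T', hS', hT', -, -, rfl⟩
  exact abs_integral_integral_le_integral_abs hW hS' hT'

theorem cutNorm_le {W : ℝ → ℝ → ℝ} {c : ℝ}
    (h : ∀ S T : Set ℝ, S ⊆ Set.Icc 0 1 → T ⊆ Set.Icc 0 1 → MeasurableSet S →
      MeasurableSet T → |∫ x in S, ∫ y in T, W x y| ≤ c) :
    cutNorm W ≤ c := by
  refine csSup_le ⟨_, ∅, ∅, by simp, by simp, .empty, .empty, rfl⟩ ?_
  rintro r ⟨S, T, hS, hT, hSm, hTm, rfl⟩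
  exact h S T hS hT hSm hTm

namespace IsPartition

variable {P : Finset (Set ℝ)}

theorem measurableSet (hP : IsPartition P) {A : Set ℝ} (hA : A ∈ P) : MeasurableSet A :=
  (hP.1 A hA).1

theorem subset_Icc (hP : IsPartition P) {A : Set ℝ} (hA : A ∈ P) : A ⊆ Set.Icc 0 1 :=
  hP.2.1 ▸ Set.subset_sUnion_of_mem hA

theorem pairwise_disjoint (hP : IsPartition P) : (P : Set (Set ℝ)).Pairwise Disjoint :=
  fun A hA B hB h => hP.2.2 A hA B hB h

theorem exists_mem (hP : IsPartition P) {x : ℝ} (hx : x ∈ Set.Icc 0 1) : ∃ A ∈ P, x ∈ A := by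
  rw [← hP.2.1] at hx
  obtain ⟨A, hA, hxA⟩ := hx
  exact ⟨A, hA, hxA⟩

theorem volume_ne_top (hP : IsPartition P) {A : Set ℝ} (hA : A ∈ P) : volume A ≠ ⊤ :=
  ((measure_mono (hP.subset_Icc hA)).trans_lt measure_Icc_lt_top).ne

theorem measureReal_ne_zero (hP : IsPartition P) {A : Set ℝ} (hA : A ∈ P) :
    volume.real A ≠ 0 :=
  (ENNReal.toReal_pos (hP.1 A hA).2.ne' (hP.volume_ne_top hA)).ne'

theorem integrableOn_prod (hP : IsPartition P) {f : ℝ × ℝ → ℝ}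
    (hf : IntegrableOn f (Set.Icc 0 1 ×ˢ Set.Icc 0 1)) {A B : Set ℝ} (hA : A ∈ P) (hB : B ∈ P) :
    IntegrableOn f (A ×ˢ B) :=
  hf.mono_set (Set.prod_mono (hP.subset_Icc hA) (hP.subset_Icc hB))

theorem integral_integral_biUnion {Q R : Finset (Set ℝ)} (hP : IsPartition P) (hQ : Q ⊆ P)
    (hR : R ⊆ P) {W : ℝ → ℝ → ℝ}
    (hW : IntegrableOn (fun p : ℝ × ℝ => W p.1 p.2) (Set.Icc 0 1 ×ˢ Set.Icc 0 1)) :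
    ∫ x in ⋃ A ∈ Q, A, ∫ y in ⋃ B ∈ R, B, W x y =
      ∑ A ∈ Q, ∑ B ∈ R, ∫ x in A, ∫ y in B, W x y := by
  have hQR : (⋃ A ∈ Q, A) ×ˢ (⋃ B ∈ R, B) ⊆ Set.Icc 0 1 ×ˢ Set.Icc 0 1 :=
    Set.prod_mono (Set.iUnion₂_subset fun A hA => hP.subset_Icc (hQ hA))
      (Set.iUnion₂_subset fun B hB => hP.subset_Icc (hR hB))
  rw [integral_integral_eq_setIntegral_prod (hW.mono_set hQR),
    setIntegral_biUnion_prod_biUnion (fun A hA => hP.measurableSet (hQ hA))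
      (hP.pairwise_disjoint.mono (by simpa using hQ)) (fun B hB => hP.measurableSet (hR hB))
      (hP.pairwise_disjoint.mono (by simpa using hR)) (hW.mono_set hQR)]
  exact Finset.sum_congr rfl fun A hA => Finset.sum_congr rfl fun B hB =>
    (integral_integral_eq_setIntegral_prod (hP.integrableOn_prod hW (hQ hA) (hR hB))).symm

end IsPartition

theorem measureReal_inter_div_mem_Icc {α : Type*} [MeasurableSpace α] (μ : Measure α)
    {A : Set α} (S : Set α) (hA : μ A ≠ ⊤) : μ.real (A ∩ S) / μ.real A ∈ Set.Icc 0 1 :=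
  ⟨by positivity, div_le_one_of_le₀ (measureReal_mono Set.inter_subset_left hA) measureReal_nonneg⟩

theorem stepping_apply_of_mem {P : Finset (Set ℝ)} (hP : IsPartition P) (W : ℝ → ℝ → ℝ)
    {A B : Set ℝ} {x y : ℝ} (hA : A ∈ P) (hB : B ∈ P) (hx : x ∈ A) (hy : y ∈ B) :
    stepping P W x y = (∫ s in A, ∫ t in B, W s t) / (volume.real A * volume.real B) := by
  unfold stepping
  rw [Finset.sum_eq_single_of_mem A hA fun A' hA' hne => Finset.sum_eq_zero fun B' _ =>
      if_neg fun h => Set.disjoint_left.1 (hP.pairwise_disjoint hA' hA hne) h.1 hx,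
    Finset.sum_eq_single_of_mem B hB fun B' hB' hne =>
      if_neg fun h => Set.disjoint_left.1 (hP.pairwise_disjoint hB' hB hne) h.2 hy,
    if_pos ⟨hx, hy⟩]
  rfl

theorem stepping_apply_eq_self {P : Finset (Set ℝ)} (hP : IsPartition P) {W : ℝ → ℝ → ℝ}
    (hW : ∀ S ∈ P, ∀ T ∈ P, ∀ x ∈ S, ∀ x' ∈ S, ∀ y ∈ T, ∀ y' ∈ T, W x y = W x' y')
    {x y : ℝ} (hx : x ∈ Set.Icc 0 1) (hy : y ∈ Set.Icc 0 1) :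
    stepping P W x y = W x y := by
  obtain ⟨A, hA, hxA⟩ := hP.exists_mem hx
  obtain ⟨B, hB, hyB⟩ := hP.exists_mem hy
  have hblock : ∫ s in A, ∫ t in B, W s t = volume.real A * (volume.real B * W x y) := by
    rw [setIntegral_congr_fun (hP.measurableSet hA) fun s hs =>
      setIntegral_congr_fun (hP.measurableSet hB) fun t ht => hW A hA B hB s hs x hxA t ht y hyB]
    simp only [setIntegral_const, smul_eq_mul]
  rw [stepping_apply_of_mem hP W hA hB hxA hyB, hblock]
  field_simp [hP.measureReal_ne_zero hA, hP.measureReal_ne_zero hB]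

theorem stepping_sub (P : Finset (Set ℝ)) {f g : ℝ → ℝ → ℝ}
    (hf : ∀ A ∈ P, ∀ B ∈ P, IntegrableOn (fun p : ℝ × ℝ => f p.1 p.2) (A ×ˢ B))
    (hg : ∀ A ∈ P, ∀ B ∈ P, IntegrableOn (fun p : ℝ × ℝ => g p.1 p.2) (A ×ˢ B)) (x y : ℝ) :
    stepping P (fun a b => f a b - g a b) x y = stepping P f x y - stepping P g x y := by
  simp only [stepping, ← Finset.sum_sub_distrib]
  refine Finset.sum_congr rfl fun A hA => Finset.sum_congr rfl fun B hB => ?_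
  split_ifs
  · rw [integral_integral_sub_of_integrableOn (hf A hA B hB) (hg A hA B hB), sub_div]
  · rw [sub_zero]

theorem stepping_uncurry_eq_sum_indicator (P : Finset (Set ℝ)) (W : ℝ → ℝ → ℝ) :
    (fun p : ℝ × ℝ => stepping P W p.1 p.2) = fun p => ∑ A ∈ P, ∑ B ∈ P,
      (A ×ˢ B).indicator
        (fun _ => (∫ s in A, ∫ t in B, W s t) / (volume.real A * volume.real B)) p := by
  funext p
  refine Finset.sum_congr rfl fun A _ => Finset.sum_congr rfl fun B _ => ?_
  by_cases h : p ∈ A ×ˢ B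
  · rw [Set.indicator_of_mem h]
    exact if_pos h
  · rw [Set.indicator_of_notMem h]
    exact if_neg h

theorem integrableOn_stepping {P : Finset (Set ℝ)} (hPm : ∀ A ∈ P, MeasurableSet A)
    (W : ℝ → ℝ → ℝ) {K : Set (ℝ × ℝ)} (hK : volume K ≠ ⊤) :
    IntegrableOn (fun p : ℝ × ℝ => stepping P W p.1 p.2) K := by
  rw [stepping_uncurry_eq_sum_indicator]
  exact integrable_finsetSum _ fun A hA => integrable_finsetSum _ fun B hB =>
    (integrableOn_const hK).indicator ((hPm A hA).prod (hPm B hB))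

theorem setIntegral_stepping {P : Finset (Set ℝ)} (hPm : ∀ A ∈ P, MeasurableSet A)
    (W : ℝ → ℝ → ℝ) {S T : Set ℝ} (hST : volume (S ×ˢ T) ≠ ⊤) :
    ∫ p in S ×ˢ T, stepping P W p.1 p.2 = ∑ A ∈ P, ∑ B ∈ P,
      volume.real (A ∩ S) / volume.real A * (volume.real (B ∩ T) / volume.real B) *
        ∫ x in A, ∫ y in B, W x y := by
  have hblock : ∀ A ∈ P, ∀ B ∈ P, IntegrableOn ((A ×ˢ B).indicator
      fun _ => (∫ s in A, ∫ t in B, W s t) / (volume.real A * volume.real B)) (S ×ˢ T) :=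
    fun A hA B hB => (integrableOn_const hST).indicator ((hPm A hA).prod (hPm B hB))
  rw [stepping_uncurry_eq_sum_indicator,
    integral_finsetSum _ fun A hA => integrable_finsetSum _ (hblock A hA)]
  refine Finset.sum_congr rfl fun A hA => ?_
  rw [integral_finsetSum _ (hblock A hA)]
  refine Finset.sum_congr rfl fun B hB => ?_
  rw [integral_indicator_const _ ((hPm A hA).prod (hPm B hB)),
    measureReal_restrict_apply ((hPm A hA).prod (hPm B hB)), Set.prod_inter_prod,
    Measure.volume_eq_prod, measureReal_prod_prod, smul_eq_mul]
  ring

theorem abs_integral_integral_stepping_le_cutNorm {P : Finset (Set ℝ)} (hP : IsPartition P)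
    {W : ℝ → ℝ → ℝ}
    (hW : IntegrableOn (fun p : ℝ × ℝ => W p.1 p.2) (Set.Icc 0 1 ×ˢ Set.Icc 0 1))
    {S T : Set ℝ} (hS : S ⊆ Set.Icc 0 1) (hT : T ⊆ Set.Icc 0 1) :
    |∫ x in S, ∫ y in T, stepping P W x y| ≤ cutNorm W := by
  have hST := volume_prod_ne_top_of_subset_Icc hS hT
  obtain ⟨Q, hQ, R, hR, hQR⟩ := exists_subsets_abs_sum_sum_mul_le P P
    (fun A => volume.real (A ∩ S) / volume.real A) (fun B => volume.real (B ∩ T) / volume.real B)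
    (fun A B => ∫ x in A, ∫ y in B, W x y)
    (fun A hA => measureReal_inter_div_mem_Icc _ S (hP.volume_ne_top hA))
    (fun B hB => measureReal_inter_div_mem_Icc _ T (hP.volume_ne_top hB))
  rw [integral_integral_eq_setIntegral_prod (W := stepping P W)
      (integrableOn_stepping (fun A => hP.measurableSet) W hST),
    setIntegral_stepping (fun A => hP.measurableSet) W hST]
  refine hQR.trans ?_
  rw [← hP.integral_integral_biUnion hQ hR hW]
  exact abs_integral_integral_le_cutNorm hW
    (Set.iUnion₂_subset fun A hA => hP.subset_Icc (hQ hA))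
    (Set.iUnion₂_subset fun B hB => hP.subset_Icc (hR hB))
    (Q.measurableSet_biUnion fun A hA => hP.measurableSet (hQ hA))
    (R.measurableSet_biUnion fun B hB => hP.measurableSet (hR hB))

theorem stmt11_general (P : Finset (Set ℝ)) (hP : IsPartition P) (W₁ W₂ : ℝ → ℝ → ℝ)
    (hW₁int : IntegrableOn (fun p : ℝ × ℝ => W₁ p.1 p.2) (Set.Icc 0 1 ×ˢ Set.Icc 0 1))
    (hW₂int : IntegrableOn (fun p : ℝ × ℝ => W₂ p.1 p.2) (Set.Icc 0 1 ×ˢ Set.Icc 0 1))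
    (hW₂step : ∀ S ∈ P, ∀ T ∈ P, ∀ x ∈ S, ∀ x' ∈ S, ∀ y ∈ T, ∀ y' ∈ T,
      W₂ x y = W₂ x' y') :
    cutNorm (fun x y => W₁ x y - stepping P W₁ x y)
      ≤ 2 * cutNorm (fun x y => W₁ x y - W₂ x y) := by
  set U : ℝ → ℝ → ℝ := fun x y => W₁ x y - W₂ x y
  have hU : IntegrableOn (fun p : ℝ × ℝ => U p.1 p.2) (Set.Icc 0 1 ×ˢ Set.Icc 0 1) :=
    hW₁int.sub hW₂int
  have hpointwise : ∀ x ∈ Set.Icc (0 : ℝ) 1, ∀ y ∈ Set.Icc (0 : ℝ) 1,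
      W₁ x y - stepping P W₁ x y = U x y - stepping P U x y := fun x hx y hy => by
    rw [stepping_sub P (fun A hA B hB => hP.integrableOn_prod hW₁int hA hB)
      (fun A hA B hB => hP.integrableOn_prod hW₂int hA hB),
      stepping_apply_eq_self hP hW₂step hx hy]
    ring
  refine cutNorm_le fun S T hS hT hSm hTm => ?_
  rw [setIntegral_congr_fun hSm fun x hx => setIntegral_congr_fun hTm fun y hy =>
      hpointwise x (hS hx) y (hT hy),
    integral_integral_sub_of_integrableOn (hU.mono_set (Set.prod_mono hS hT))
      (integrableOn_stepping (fun A => hP.measurableSet) U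
        (volume_prod_ne_top_of_subset_Icc hS hT))]
  calc _ ≤ |∫ x in S, ∫ y in T, U x y| + |∫ x in S, ∫ y in T, stepping P U x y| := abs_sub _ _
    _ ≤ cutNorm U + cutNorm U := add_le_add (abs_integral_integral_le_cutNorm hU hS hT hSm hTm)
        (abs_integral_integral_stepping_le_cutNorm hP hU hS hT)
    _ = 2 * cutNorm U := by ring

theorem stmt11 (P : Finset (Set ℝ)) (hP : IsPartition P) (W₁ W₂ : ℝ → ℝ → ℝ)
    (hW₁meas : Measurable fun p : ℝ × ℝ => W₁ p.1 p.2)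
    (hW₂meas : Measurable fun p : ℝ × ℝ => W₂ p.1 p.2)
    (hW₁int : IntegrableOn (fun p : ℝ × ℝ => W₁ p.1 p.2) (Set.Icc 0 1 ×ˢ Set.Icc 0 1))
    (hW₂int : IntegrableOn (fun p : ℝ × ℝ => W₂ p.1 p.2) (Set.Icc 0 1 ×ˢ Set.Icc 0 1))
    (hW₂step : ∀ S ∈ P, ∀ T ∈ P, ∀ x ∈ S, ∀ x' ∈ S, ∀ y ∈ T, ∀ y' ∈ T,
      W₂ x y = W₂ x' y') :
    cutNorm (fun x y => W₁ x y - stepping P W₁ x y)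
      ≤ 2 * cutNorm (fun x y => W₁ x y - W₂ x y) :=
  stmt11_general P hP W₁ W₂ hW₁int hW₂int hW₂step
end
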